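/- Let F_q be a finite field, λ = 1 + γβ be as above with chain ring R of nilpotency index e, residue field F_q of characteristic p, and N = n p^s with gcd(n,p)=1. In the quotient ring R[x]/⟨x^N - λ⟩, the element x^n - 1 is nilpotent with nilpotency index exactly e p^s, i.e., (x^n - 1)^{e p^s} = 0 but (x^n - 1)^{e p^s - 1} ≠ 0. -/

import Mathlib

/-!
Modulo `p` one has `(X - 1) ^ p ^ s = X ^ p ^ s - 1`, and the difference vanishes at `X = 1`, so
`(a - 1) ^ p ^ s = a ^ p ^ s - 1 + p (a - 1) b` in any commutative ring. In
`S = R[x]/⟨x ^ N - λ⟩` we have `x ^ N - 1 = γ β` and `γ ∣ p`, hence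
`(x ^ n - 1) ^ p ^ s = γ u` with `u = β + (nilpotent)` a unit. Then
`(x ^ n - 1) ^ (e p ^ s) = γ ^ e u ^ e = 0`, while
`(x ^ n - 1) ^ (e p ^ s - 1) = u ^ (e - 1) γ ^ (e - 1) (x ^ n - 1) ^ (p ^ s - 1)`, and the last factor
is a nonzero polynomial of degree `< N`, so it is not a multiple of the monic `x ^ N - λ`.
-/

open IsLocalRing Polynomial

theorem Polynomial.exists_X_sub_one_pow_prime_pow_eq {p : ℕ} (hp : p.Prime) (s : ℕ) :
    ∃ E : ℤ[X], (X - 1) ^ p ^ s = X ^ p ^ s - 1 + (p : ℤ[X]) * ((X - 1) * E) := by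
  have : Fact p.Prime := ⟨hp⟩
  set D : ℤ[X] := (X - 1) ^ p ^ s - (X ^ p ^ s - 1) with hD
  obtain ⟨D', hD'⟩ : C (p : ℤ) ∣ D := by
    refine (C_dvd_iff_dvd_coeff _ _).2 fun i => (ZMod.intCast_zmod_eq_zero_iff_dvd _ p).1 ?_
    have hmod : D.map (Int.castRingHom (ZMod p)) = 0 := by
      simp [D, sub_pow_char_pow]
    simpa using congrArg (coeff · i) hmod
  have hroot : D'.IsRoot 1 := by
    have : D.eval 1 = 0 := by simp [D, hp.ne_zero]
    simpa [hD', hp.ne_zero] using this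
  obtain ⟨E, hE⟩ := dvd_iff_isRoot.2 hroot
  rw [hE, C_1, map_natCast] at hD'
  exact ⟨E, by linear_combination hD' - hD⟩

theorem exists_sub_one_pow_prime_pow_eq {A : Type*} [CommRing A] {p : ℕ} (hp : p.Prime) (s : ℕ)
    (a : A) : ∃ b : A, (a - 1) ^ p ^ s = a ^ p ^ s - 1 + p * ((a - 1) * b) := by
  obtain ⟨E, hE⟩ := Polynomial.exists_X_sub_one_pow_prime_pow_eq hp s
  exact ⟨aeval a E, by simpa using congrArg (aeval a) hE⟩

theorem IsLocalRing.natCast_mem_maximalIdeal (R : Type*) [CommRing R] [IsLocalRing R] (p : ℕ)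
    [CharP (ResidueField R) p] : (p : R) ∈ maximalIdeal R := by
  rw [← residue_eq_zero_iff, map_natCast]
  exact CharP.cast_eq_zero _ p

theorem pow_mul_eq_zero_of_pow_eq_mul {S : Type*} [CommMonoidWithZero S] {y c u : S} {m e : ℕ}
    (h : y ^ m = c * u) (hc : c ^ e = 0) : y ^ (e * m) = 0 := by
  rw [mul_comm, pow_mul, h, mul_pow, hc, zero_mul]

theorem pow_mul_sub_one_eq_of_pow_eq_mul {S : Type*} [CommMonoid S] {y c u : S} {m e : ℕ}
    (h : y ^ m = c * u) (he : 0 < e) (hm : 0 < m) :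
    y ^ (e * m - 1) = u ^ (e - 1) * (c ^ (e - 1) * y ^ (m - 1)) := by
  obtain ⟨e, rfl⟩ : ∃ e', e = e' + 1 := ⟨e - 1, by omega⟩
  obtain ⟨m, rfl⟩ : ∃ m', m = m' + 1 := ⟨m - 1, by omega⟩
  have hexp : (e + 1) * (m + 1) - 1 = (m + 1) * e + m := by
    rw [show (e + 1) * (m + 1) = (m + 1) * e + m + 1 by ring, Nat.add_sub_cancel]
  rw [hexp, pow_add, pow_mul, h, Nat.add_sub_cancel, Nat.add_sub_cancel, mul_pow,
    mul_comm (c ^ e), mul_assoc]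

theorem Polynomial.mk_C_mul_X_pow_sub_one_pow_ne_zero {R : Type*} [CommRing R] {a : R}
    (ha : a ≠ 0) {n k N : ℕ} (hn : 0 < n) (hkN : k * n < N) (c : R) :
    Ideal.Quotient.mk (Ideal.span {X ^ N - C c}) (C a * (X ^ n - 1) ^ k) ≠ 0 := by
  have : Nontrivial R := ⟨⟨a, 0, ha⟩⟩
  have hmon : ((X : R[X]) ^ n - 1).Monic := by simpa using monic_X_pow_sub_C (1 : R) hn.ne'
  refine AdjoinRoot.mk_ne_zero_of_natDegree_lt (monic_X_pow_sub_C c (by omega))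
    ((hmon.pow k).mul_left_ne_zero (C_ne_zero.2 ha)) ?_
  calc (C a * (X ^ n - 1) ^ k).natDegree ≤ (((X : R[X]) ^ n - 1) ^ k).natDegree :=
        natDegree_C_mul_le _ _
    _ = k * n := by rw [hmon.natDegree_pow, ← C_1, natDegree_X_pow_sub_C]
    _ < (X ^ N - C c).natDegree := by rwa [natDegree_X_pow_sub_C]

theorem exists_isUnit_mk_X_pow_sub_one_pow_eq_mul {R : Type*} [CommRing R] {γ β : R}
    (hγ : IsNilpotent γ) (hβ : IsUnit β) {p : ℕ} (hp : p.Prime) (hγp : γ ∣ (p : R)) (n s : ℕ) :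
    ∃ u, IsUnit u ∧ Ideal.Quotient.mk (Ideal.span {X ^ (n * p ^ s) - C (1 + γ * β)})
      ((X ^ n - 1) ^ p ^ s) = Ideal.Quotient.mk _ (C γ) * u := by
  set π := Ideal.Quotient.mk (Ideal.span {X ^ (n * p ^ s) - C (1 + γ * β)})
  obtain ⟨r, hr⟩ := hγp
  obtain ⟨b, hb⟩ := exists_sub_one_pow_prime_pow_eq hp s (π (X ^ n))
  have hXN : π X ^ (n * p ^ s) = 1 + π (C γ) * π (C β) := by
    rw [← sub_eq_zero, ← map_pow, ← map_mul, ← map_one π, ← map_add, ← map_sub,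
      Ideal.Quotient.eq_zero_iff_mem, ← C_1, ← C_mul, ← C_add]
    exact Ideal.subset_span rfl
  have hp' : (p : R[X] ⧸ _) = π (C γ) * π (C r) := by
    rw [← map_mul, ← C_mul, ← hr, map_natCast, map_natCast]
  set u := π (C β) + π (C r) * (π (X ^ n - 1) * b) with hu
  have hyu : π (X ^ n - 1) ^ p ^ s = π (C γ) * u := by
    rw [hu, map_sub, map_one, hb, hp', map_pow, ← pow_mul, hXN]
    ring
  -- `x ^ n - 1` is nilpotent because its `p ^ s`-th power is a multiple of `γ`.
  have hy : IsNilpotent (π (X ^ n - 1)) := by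
    obtain ⟨e, he⟩ := hγ.map (π.comp C)
    exact ⟨_, pow_mul_eq_zero_of_pow_eq_mul hyu he⟩
  refine ⟨u, ?_, by rw [map_pow, hyu]⟩
  exact ((Commute.all _ _).isNilpotent_mul_left ((Commute.all _ _).isNilpotent_mul_right hy))
    |>.isUnit_add_left_of_commute (hβ.map (π.comp C)) (Commute.all _ _)

theorem nilpotency_index_of_X_pow_n_sub_one_general (R : Type*) [CommRing R] [IsLocalRing R]
    (γ : R) (hγ : maximalIdeal R = Ideal.span {γ})
    (e : ℕ) (he : 0 < e) (hnil : γ ^ e = 0) (hnil' : γ ^ (e - 1) ≠ 0)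
    (p : ℕ) (hp : p.Prime) [CharP (ResidueField R) p]
    (β : R) (hβ : IsUnit β)
    (n s : ℕ) (hn0 : 0 < n) :
    Ideal.Quotient.mk (Ideal.span {X ^ (n * p ^ s) - C (1 + γ * β)})
        ((X ^ n - 1) ^ (e * p ^ s)) = 0 ∧
    Ideal.Quotient.mk (Ideal.span {X ^ (n * p ^ s) - C (1 + γ * β)})
        ((X ^ n - 1) ^ (e * p ^ s - 1)) ≠ 0 := by
  have hγp : γ ∣ (p : R) :=
    Ideal.mem_span_singleton.1 (hγ ▸ natCast_mem_maximalIdeal R p)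
  obtain ⟨u, hu, hyu⟩ :=
    exists_isUnit_mk_X_pow_sub_one_pow_eq_mul ⟨e, hnil⟩ hβ hp hγp n s
  set π := Ideal.Quotient.mk (Ideal.span {X ^ (n * p ^ s) - C (1 + γ * β)})
  rw [map_pow] at hyu
  have hγe : π (C γ) ^ e = 0 := by rw [← map_pow, ← C_pow, hnil, C_0, map_zero]
  refine ⟨by rw [map_pow]; exact pow_mul_eq_zero_of_pow_eq_mul hyu hγe, ?_⟩
  rw [map_pow, pow_mul_sub_one_eq_of_pow_eq_mul hyu he (pow_pos hp.pos s), ne_eq,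
    (hu.pow _).mul_right_eq_zero, ← map_pow, ← C_pow, ← map_pow, ← map_mul]
  refine mk_C_mul_X_pow_sub_one_pow_ne_zero hnil' hn0 ?_ _
  rw [mul_comm n]
  exact Nat.mul_lt_mul_of_pos_right (Nat.sub_lt (pow_pos hp.pos s) one_pos) hn0

theorem nilpotency_index_of_X_pow_n_sub_one (R : Type*) [CommRing R] [Finite R] [IsLocalRing R]
    (hchain : ∀ I J : Ideal R, I ≤ J ∨ J ≤ I)
    (γ : R) (hγ : maximalIdeal R = Ideal.span {γ})
    (e : ℕ) (he : 0 < e) (hnil : γ ^ e = 0) (hnil' : γ ^ (e - 1) ≠ 0)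
    (p : ℕ) (hp : p.Prime) [CharP (ResidueField R) p]
    (β : R) (hβ : IsUnit β)
    (n s : ℕ) (hn : Nat.Coprime n p) (hn0 : 0 < n) :
    Ideal.Quotient.mk (Ideal.span {X ^ (n * p ^ s) - C (1 + γ * β)})
        ((X ^ n - 1) ^ (e * p ^ s)) = 0 ∧
    Ideal.Quotient.mk (Ideal.span {X ^ (n * p ^ s) - C (1 + γ * β)})
        ((X ^ n - 1) ^ (e * p ^ s - 1)) ≠ 0 :=
  nilpotency_index_of_X_pow_n_sub_one_general R γ hγ e he hnil hnil' p hp β hβ n s hn0
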